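/- arXiv:1805.02890 — 3 statements merged into one kernel-verified Lean document; each statement's English description precedes it below -/
import Mathlib

section
/- Let β ∈ ℝ, C′ > 0, and let k, ℓ ∈ ℕ^{d+1} be multiindices such that for every n ∈ ℕ and every integer 0 ≤ j ≤ ℓ₀ one has |∫_{ℝ^{d+1}} z₀^j z₁^{ℓ₁} ⋯ z_d^{ℓ_d} D^k K_n(z) dz| ≤ C′·2^{−βn}. Then for all n ∈ ℕ and m ∈ ℤ: |∫_{ℝ^{d+1}} z^ℓ D^k K^Q_{nm}(z) dz| ≤ 2·(2+2T)^{ℓ₀}·C′·‖Q‖_∞·2^{−(β+s₀)n}, where z^ℓ = z₀^{ℓ₀} z₁^{ℓ₁} ⋯ z_d^{ℓ_d} and ‖Q‖_∞ = sup_{t∈ℝ} |Q(t)|. -/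
open MeasureTheory Set

set_option maxHeartbeats 1000000


/-- The partial derivative in coordinate direction `i`. -/
noncomputable def pderivI {N : ℕ} (i : Fin N) (f : (Fin N → ℝ) → ℝ) :
    (Fin N → ℝ) → ℝ :=
  fun x => fderiv ℝ f x (Pi.single i 1)

/-- The multiindex derivative `D^k`, i.e. `∂₀^{k₀} ⋯ ∂_d^{k_d}`. -/
noncomputable def Dmulti {N : ℕ} (k : Fin N → ℕ) (f : (Fin N → ℝ) → ℝ) :
    (Fin N → ℝ) → ℝ :=
  (((List.finRange N).map fun i => (pderivI i)^[k i]).foldr (· ∘ ·) id) f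

/-- smooth + compact support preserved by pderivI -/
lemma pderivI_smooth_cs {N : ℕ} (i : Fin N) {f : (Fin N → ℝ) → ℝ}
    (hf : ContDiff ℝ (⊤ : ℕ∞) f ∧ HasCompactSupport f) :
    ContDiff ℝ (⊤ : ℕ∞) (pderivI i f) ∧ HasCompactSupport (pderivI i f) := by
  constructor
  · exact (hf.1.fderiv_right (by simp)).clm_apply contDiff_const
  · exact hf.2.fderiv_apply ℝ (Pi.single i 1)

lemma iter_smooth_cs {N : ℕ} (i : Fin N) (kk : ℕ) {f : (Fin N → ℝ) → ℝ}
    (hf : ContDiff ℝ (⊤ : ℕ∞) f ∧ HasCompactSupport f) :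
    ContDiff ℝ (⊤ : ℕ∞) ((pderivI i)^[kk] f) ∧ HasCompactSupport ((pderivI i)^[kk] f) := by
  induction kk with
  | zero => simpa using hf
  | succ p ih =>
      rw [Function.iterate_succ_apply']
      exact pderivI_smooth_cs i ih

noncomputable def Dlist {N : ℕ} (k : Fin N → ℕ) (L : List (Fin N))
    (f : (Fin N → ℝ) → ℝ) : (Fin N → ℝ) → ℝ :=
  ((L.map fun i => (pderivI i)^[k i]).foldr (· ∘ ·) id) f

lemma Dmulti_eq_Dlist {N : ℕ} (k : Fin N → ℕ) (f : (Fin N → ℝ) → ℝ) :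
    Dmulti k f = Dlist k (List.finRange N) f := rfl

lemma Dlist_nil {N : ℕ} (k : Fin N → ℕ) (f : (Fin N → ℝ) → ℝ) :
    Dlist k [] f = f := rfl

lemma Dlist_cons {N : ℕ} (k : Fin N → ℕ) (i : Fin N) (L : List (Fin N))
    (f : (Fin N → ℝ) → ℝ) :
    Dlist k (i :: L) f = (pderivI i)^[k i] (Dlist k L f) := rfl

lemma Dlist_smooth_cs {N : ℕ} (k : Fin N → ℕ) (L : List (Fin N))
    {f : (Fin N → ℝ) → ℝ}
    (hf : ContDiff ℝ (⊤ : ℕ∞) f ∧ HasCompactSupport f) :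
    ContDiff ℝ (⊤ : ℕ∞) (Dlist k L f) ∧ HasCompactSupport (Dlist k L f) := by
  induction L with
  | nil => simpa [Dlist_nil] using hf
  | cons i L ih => rw [Dlist_cons]; exact iter_smooth_cs i (k i) ih

lemma key_pderiv {N : ℕ} (qn : ℝ → ℝ) (hmeas : Measurable qn)
    (hint : Integrable qn)
    (e0 : Fin N → ℝ) (i : Fin N) {f : (Fin N → ℝ) → ℝ}
    (hf : ContDiff ℝ (⊤ : ℕ∞) f) (hcs : HasCompactSupport f) (z : Fin N → ℝ) :
    pderivI i (fun w => ∫ v : ℝ, qn v * f (w - v • e0)) z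
      = ∫ v : ℝ, qn v * pderivI i f (z - v • e0) := by
  obtain ⟨Cf, hCf⟩ := hcs.exists_bound_of_continuous hf.continuous
  obtain ⟨K, hK⟩ := ContDiff.lipschitzWith_of_hasCompactSupport hcs hf (by simp)
  have hsub : ∀ w : Fin N → ℝ, Continuous fun v : ℝ => w - v • e0 := fun w =>
    continuous_const.sub (continuous_id.smul continuous_const)
  have hsub' : Continuous fun v : ℝ => z - v • e0 := hsub z
  have hfc : Continuous (fderiv ℝ f) := hf.continuous_fderiv (by simp)
  have hmain := hasFDerivAt_integral_of_dominated_loc_of_lip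
    (F := fun w v => qn v * f (w - v • e0))
    (F' := fun v => qn v • fderiv ℝ f (z - v • e0)) (x₀ := z)
    (bound := fun v => (K : ℝ) * |qn v|) (s := Metric.ball z 1) (μ := volume) (Metric.ball_mem_nhds z one_pos)
    (Filter.Eventually.of_forall fun w =>
      (hmeas.mul ((hf.continuous.comp (hsub w)).measurable)).aestronglyMeasurable)
    ?_ ?_ ?_ ?_ ?_
  · obtain ⟨hFi, hFd⟩ := hmain
    have h1 : pderivI i (fun w => ∫ v : ℝ, qn v * f (w - v • e0)) z
        = (∫ v : ℝ, qn v • fderiv ℝ f (z - v • e0)) (Pi.single i 1) := by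
      rw [pderivI, hFd.fderiv]
    rw [h1, ContinuousLinearMap.integral_apply hFi]
    simp [pderivI, smul_eq_mul]
  · -- Integrable (F z)
    refine Integrable.mono' (hint.abs.const_mul Cf)
      ((hmeas.mul ((hf.continuous.comp (hsub z)).measurable)).aestronglyMeasurable)
      (Filter.Eventually.of_forall fun v => ?_)
    rw [norm_mul]
    calc ‖qn v‖ * ‖f (z - v • e0)‖ ≤ ‖qn v‖ * Cf :=
          mul_le_mul_of_nonneg_left (hCf _) (norm_nonneg _)
      _ = Cf * |qn v| := by rw [Real.norm_eq_abs, mul_comm]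
  · -- AEStronglyMeasurable F'
    exact (hmeas.aestronglyMeasurable.smul
      ((hfc.comp hsub').aestronglyMeasurable))
  · -- Lipschitz
    refine Filter.Eventually.of_forall fun v => ?_
    have hL : LipschitzWith (Real.nnabs ((K : ℝ) * |qn v|))
        (fun w : Fin N → ℝ => qn v * f (w - v • e0)) := by
      apply LipschitzWith.of_dist_le_mul
      intro w1 w2
      have h1 : dist (qn v * f (w1 - v • e0)) (qn v * f (w2 - v • e0))
          = |qn v| * dist (f (w1 - v • e0)) (f (w2 - v • e0)) := by
        simp only [Real.dist_eq, ← mul_sub, abs_mul]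
      rw [h1]
      have h2 := hK.dist_le_mul (w1 - v • e0) (w2 - v • e0)
      rw [dist_sub_right] at h2
      have : (Real.nnabs ((K : ℝ) * |qn v|) : ℝ) = (K : ℝ) * |qn v| := by
        rw [Real.coe_nnabs, abs_of_nonneg (mul_nonneg K.coe_nonneg (abs_nonneg _))]
      rw [this]
      calc |qn v| * dist (f (w1 - v • e0)) (f (w2 - v • e0))
          ≤ |qn v| * ((K : ℝ) * dist w1 w2) :=
            mul_le_mul_of_nonneg_left h2 (abs_nonneg _)
        _ = (K : ℝ) * |qn v| * dist w1 w2 := by ring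
    exact hL.lipschitzOnWith
  · exact hint.abs.const_mul _
  · -- HasFDerivAt
    refine Filter.Eventually.of_forall fun v => ?_
    have h1 : HasFDerivAt f (fderiv ℝ f (z - v • e0)) (z - v • e0) :=
      (hf.differentiable (by simp) _).hasFDerivAt
    have h2 : HasFDerivAt (fun w : Fin N → ℝ => w - v • e0)
        (ContinuousLinearMap.id ℝ (Fin N → ℝ)) z := (hasFDerivAt_id z).sub_const _
    have h3 := (h1.comp z h2).const_mul (qn v)
    simpa using h3

lemma key_iter {N : ℕ} (qn : ℝ → ℝ) (hmeas : Measurable qn)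
    (hint : Integrable qn) (e0 : Fin N → ℝ) (i : Fin N) (kk : ℕ)
    {f : (Fin N → ℝ) → ℝ}
    (hf : ContDiff ℝ (⊤ : ℕ∞) f ∧ HasCompactSupport f) :
    (pderivI i)^[kk] (fun w => ∫ v : ℝ, qn v * f (w - v • e0))
      = fun w => ∫ v : ℝ, qn v * ((pderivI i)^[kk] f) (w - v • e0) := by
  induction kk with
  | zero => simp
  | succ p ih =>
      rw [Function.iterate_succ_apply', ih, Function.iterate_succ_apply']
      funext z
      exact key_pderiv qn hmeas hint e0 i (iter_smooth_cs i p hf).1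
        (iter_smooth_cs i p hf).2 z

lemma key_Dlist {N : ℕ} (qn : ℝ → ℝ) (hmeas : Measurable qn)
    (hint : Integrable qn) (e0 : Fin N → ℝ) (k : Fin N → ℕ)
    (L : List (Fin N)) {f : (Fin N → ℝ) → ℝ}
    (hf : ContDiff ℝ (⊤ : ℕ∞) f ∧ HasCompactSupport f) :
    Dlist k L (fun w => ∫ v : ℝ, qn v * f (w - v • e0))
      = fun w => ∫ v : ℝ, qn v * (Dlist k L f) (w - v • e0) := by
  induction L with
  | nil => simp [Dlist_nil]
  | cons i L ih =>
      rw [Dlist_cons, ih, Dlist_cons]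
      exact key_iter qn hmeas hint e0 i (k i) (Dlist_smooth_cs k L hf)


lemma snorm_hcs {N : ℕ} (s : Fin N → ℕ) (hs : ∀ i, 0 < s i) (c : ℝ) (hc : c ≤ 1)
    {f : (Fin N → ℝ) → ℝ}
    (hsupp : Function.support f ⊆ {z | ∑ i, |z i| ^ ((s i : ℝ)⁻¹) ≤ c}) :
    HasCompactSupport f := by
  have hScl : IsClosed {z : Fin N → ℝ | ∑ i, |z i| ^ ((s i : ℝ)⁻¹) ≤ c} := by
    apply isClosed_le _ continuous_const
    apply continuous_finset_sum
    intro i _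
    exact ((continuous_abs.comp (continuous_apply i)).rpow_const
      (fun x => Or.inr (by positivity)))
  have hSball : {z : Fin N → ℝ | ∑ i, |z i| ^ ((s i : ℝ)⁻¹) ≤ c}
      ⊆ Metric.closedBall 0 1 := by
    intro z hz
    simp only [Set.mem_setOf_eq] at hz
    simp only [Metric.mem_closedBall, dist_zero_right]
    rw [pi_norm_le_iff_of_nonneg (by norm_num)]
    intro i
    rw [Real.norm_eq_abs]
    by_contra hgt
    push_neg at hgt
    have hipos : (0:ℝ) < (s i : ℝ)⁻¹ := by
      have := hs i; positivity
    have h1 : (1:ℝ) < |z i| ^ ((s i : ℝ)⁻¹) := by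
      rw [Real.one_lt_rpow_iff_of_pos (lt_trans one_pos hgt)]
      exact Or.inl ⟨hgt, hipos⟩
    have h2 : |z i| ^ ((s i : ℝ)⁻¹) ≤ ∑ j, |z j| ^ ((s j : ℝ)⁻¹) :=
      Finset.single_le_sum (f := fun j => |z j| ^ ((s j : ℝ)⁻¹)) (fun j _ => Real.rpow_nonneg (abs_nonneg _) _)
        (Finset.mem_univ i)
    linarith
  apply HasCompactSupport.of_support_subset_isCompact
    ((isCompact_closedBall (0 : Fin N → ℝ) 1).of_isClosed_subset hScl hSball)
  exact hsupp

/-- vanishing-moment bounds for `D^k K_n` imply the moment bound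
`|∫ z^ℓ D^k K^Q_{nm}(z) dz| ≤ 2(2+2T)^{ℓ₀} C′ ‖Q‖_∞ 2^{-(β+s₀)n}`. -/
theorem stmt_4
    (d : ℕ) (hd : 1 ≤ d)
    (s : Fin (d + 1) → ℕ) (hs : ∀ i, 0 < s i)
    (snorm : (Fin (d + 1) → ℝ) → ℝ)
    (hsnorm : ∀ z, snorm z = ∑ i, |z i| ^ ((s i : ℝ)⁻¹))
    (T : ℝ) (hT : 0 < T)
    (Q : ℝ → ℝ) (hQmeas : Measurable Q)
    (hQbdd : ∃ M : ℝ, ∀ t, |Q t| ≤ M)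
    (hQsupp : Function.support Q ⊆ Set.Icc 0 (2 * T))
    (φ : ℝ → ℝ) (hφcont : Continuous φ)
    (hφ01 : ∀ t, φ t ∈ Set.Icc (0 : ℝ) 1)
    (hφsupp : Function.support φ ⊆ Set.Icc (-1 : ℝ) 1)
    (hφsum : ∀ t : ℝ, HasSum (fun m : ℤ => φ (t + m)) 1)
    (Qnm : ℕ → ℤ → ℝ → ℝ)
    (hQnm : ∀ (n : ℕ) (m : ℤ) (t : ℝ),
      Qnm n m t = Q t * φ ((2 : ℝ) ^ (s 0 * n) * t - (m : ℝ)))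
    (Kn : ℕ → (Fin (d + 1) → ℝ) → ℝ)
    (hKnsmooth : ∀ n, ContDiff ℝ (⊤ : ℕ∞) (Kn n))
    (hKnsupp : ∀ n, Function.support (Kn n) ⊆ {z | snorm z ≤ (2 : ℝ) ^ (-(n : ℤ))})
    (KQnm : ℕ → ℤ → (Fin (d + 1) → ℝ) → ℝ)
    (hKQnm : ∀ (n : ℕ) (m : ℤ) (z : Fin (d + 1) → ℝ),
      KQnm n m z = ∫ u : ℝ, Qnm n m (z 0 - u) * Kn n (Function.update z 0 u))
    (β : ℝ) (C' : ℝ) (hC' : 0 < C')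
    (k ℓ : Fin (d + 1) → ℕ)
    (hmom : ∀ (n : ℕ) (j : ℕ), j ≤ ℓ 0 →
      |∫ z : Fin (d + 1) → ℝ,
        (z 0 ^ j * ∏ i : Fin d, z i.succ ^ ℓ i.succ) * Dmulti k (Kn n) z| ≤
        C' * (2 : ℝ) ^ (-β * (n : ℝ))) :
    ∀ (n : ℕ) (m : ℤ),
      |∫ z : Fin (d + 1) → ℝ, (∏ i, z i ^ ℓ i) * Dmulti k (KQnm n m) z| ≤
        2 * (2 + 2 * T) ^ (ℓ 0) * C' * (⨆ t : ℝ, |Q t|) *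
          (2 : ℝ) ^ (-(β + (s 0 : ℝ)) * (n : ℝ)) := by

  intro n m
  -- basic data
  obtain ⟨M0, hM0⟩ := hQbdd
  have hbdd : BddAbove (Set.range fun t => |Q t|) :=
    ⟨M0, by rintro x ⟨t, rfl⟩; exact hM0 t⟩
  set MQ : ℝ := ⨆ t : ℝ, |Q t| with hMQdef
  have hMQ : ∀ t, |Q t| ≤ MQ := fun t => le_ciSup hbdd t
  have hMQ0 : 0 ≤ MQ := le_trans (abs_nonneg _) (hMQ 0)
  set A : ℝ := (2:ℝ) ^ (s 0 * n) with hA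
  have hApos : (0:ℝ) < A := by positivity
  set qn : ℝ → ℝ := Qnm n m with hqndef
  have hqn_eq : qn = fun t => Q t * φ (A * t - (m:ℝ)) := funext fun t => hQnm n m t
  have hφabs : ∀ x, |φ x| ≤ 1 := fun x => abs_le.mpr ⟨by linarith [(hφ01 x).1], (hφ01 x).2⟩
  have hqnmeas : Measurable qn := by
    rw [hqn_eq]
    exact hQmeas.mul (hφcont.measurable.comp (by fun_prop))
  have hqnbd : ∀ t, |qn t| ≤ MQ := by
    intro t
    rw [hqn_eq]
    calc |Q t * φ (A * t - (m:ℝ))| = |Q t| * |φ (A * t - (m:ℝ))| := abs_mul _ _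
      _ ≤ MQ * 1 := mul_le_mul (hMQ t) (hφabs _) (abs_nonneg _) hMQ0
      _ = MQ := mul_one _
  have hqnsuppQ : ∀ t, qn t ≠ 0 → t ∈ Set.Icc (0:ℝ) (2 * T) := by
    intro t ht
    rw [hqn_eq] at ht
    exact hQsupp (fun h => ht (by simp [h]))
  have hqnsuppI : ∀ t, qn t ≠ 0 → t ∈ Set.Icc (((m:ℝ) - 1)/A) (((m:ℝ) + 1)/A) := by
    intro t ht
    rw [hqn_eq] at ht
    have hφne : φ (A * t - (m:ℝ)) ≠ 0 := fun h => ht (by simp [h])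
    have := hφsupp hφne
    obtain ⟨h1, h2⟩ := this
    constructor
    · rw [div_le_iff₀ hApos]; nlinarith [mul_comm A t]
    · rw [le_div_iff₀ hApos]; nlinarith [mul_comm A t]
  have hqnint : Integrable qn := by
    refine Integrable.mono' (g := fun v => Set.indicator (Set.Icc (((m:ℝ) - 1)/A) (((m:ℝ) + 1)/A)) (fun _ => MQ) v)
      ?_ hqnmeas.aestronglyMeasurable (Filter.Eventually.of_forall fun v => ?_)
    · rw [integrable_indicator_iff measurableSet_Icc]
      exact (integrableOn_const_iff (by finiteness)).mpr (Or.inr measure_Icc_lt_top)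
    · by_cases hv : qn v = 0
      · simp only [Real.norm_eq_abs, hv, abs_zero]
        exact Set.indicator_nonneg (fun _ _ => hMQ0) v
      · simp only [Set.indicator_of_mem (hqnsuppI v hv), Real.norm_eq_abs]
        exact hqnbd v
  -- geometry
  set e0 : Fin (d+1) → ℝ := Pi.single 0 1 with he0
  have hupd : ∀ (z : Fin (d+1) → ℝ) (v : ℝ),
      Function.update z 0 (z 0 - v) = z - v • e0 := by
    intro z v
    funext i
    by_cases h : i = 0
    · subst h; simp [he0, Function.update_apply]
    · simp [he0, Function.update_apply, h, Pi.single_apply, Ne.symm h]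
  -- Kn properties
  have hKncs : HasCompactSupport (Kn n) := by
    apply snorm_hcs s hs ((2:ℝ) ^ (-(n:ℤ)))
      (by apply zpow_le_one_of_nonpos₀ <;> simp)
    intro z hz
    have h := hKnsupp n hz
    simp only [Set.mem_setOf_eq, hsnorm] at h
    exact h
  set g : (Fin (d+1) → ℝ) → ℝ := Dmulti k (Kn n) with hgdef
  have hgsm : ContDiff ℝ (⊤ : ℕ∞) g ∧ HasCompactSupport g := by
    rw [hgdef, Dmulti_eq_Dlist]
    exact Dlist_smooth_cs k _ ⟨hKnsmooth n, hKncs⟩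
  -- KQnm as convolution
  have hKQ : KQnm n m = fun w => ∫ v : ℝ, qn v * Kn n (w - v • e0) := by
    funext w
    rw [hKQnm n m w]
    have h1 := (integral_sub_left_eq_self
      (fun u => qn (w 0 - u) * Kn n (Function.update w 0 u)) volume (w 0)).symm
    rw [h1]
    congr 1
    funext v
    rw [sub_sub_cancel, hupd]
  -- commute derivatives
  have hcomm : Dmulti k (KQnm n m) = fun w => ∫ v : ℝ, qn v * g (w - v • e0) := by
    rw [hKQ, Dmulti_eq_Dlist, key_Dlist qn hqnmeas hqnint e0 k _ ⟨hKnsmooth n, hKncs⟩,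
      hgdef, Dmulti_eq_Dlist]
  -- the polynomial
  set P : (Fin (d+1) → ℝ) → ℝ := fun z => ∏ i, z i ^ ℓ i with hP
  have hPcont : Continuous P := by
    apply continuous_finset_prod
    intro i _
    exact (continuous_apply i).pow _
  -- bounds for g
  obtain ⟨Cg0, hCg0⟩ := hgsm.2.exists_bound_of_continuous hgsm.1.continuous
  set Cg : ℝ := max Cg0 0 with hCg
  have hCgbd : ∀ x, |g x| ≤ Cg := fun x => le_trans (hCg0 x) (le_max_left _ _)
  have hCg0' : 0 ≤ Cg := le_max_right _ _
  obtain ⟨R0, hR0⟩ := hgsm.2.isBounded.subset_closedBall 0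
  set R : ℝ := max R0 0 + 2 * T * ‖e0‖ with hR
  -- bound for P on relevant ball
  obtain ⟨CP0, hCP0⟩ := (isCompact_closedBall (0 : Fin (d+1) → ℝ) R).exists_bound_of_continuousOn
    hPcont.continuousOn
  set CP : ℝ := max CP0 0 with hCP
  have hCPbd : ∀ x ∈ Metric.closedBall (0 : Fin (d+1) → ℝ) R, |P x| ≤ CP :=
    fun x hx => le_trans (hCP0 x hx) (le_max_left _ _)
  have hCP0' : 0 ≤ CP := le_max_right _ _
  -- Fubini integrability
  have hHmeas : AEStronglyMeasurable
      (fun p : (Fin (d+1) → ℝ) × ℝ => P p.1 * (qn p.2 * g (p.1 - p.2 • e0)))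
      (volume.prod volume) := by
    apply Measurable.aestronglyMeasurable
    apply ((hPcont.measurable).comp measurable_fst).mul
    apply (hqnmeas.comp measurable_snd).mul
    exact (hgsm.1.continuous.measurable).comp (by fun_prop)
  have hHsupp : ∀ p : (Fin (d+1) → ℝ) × ℝ,
      P p.1 * (qn p.2 * g (p.1 - p.2 • e0)) ≠ 0 →
      p ∈ Metric.closedBall (0 : Fin (d+1) → ℝ) R ×ˢ Set.Icc (0:ℝ) (2*T) := by
    intro p hp
    have hqne : qn p.2 ≠ 0 := fun h => hp (by simp [h])
    have hgne : g (p.1 - p.2 • e0) ≠ 0 := fun h => hp (by simp [h])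
    have hv := hqnsuppQ _ hqne
    constructor
    · simp only [Metric.mem_closedBall, dist_zero_right]
      have h1 : p.1 - p.2 • e0 ∈ Metric.closedBall (0 : Fin (d+1) → ℝ) (max R0 0) := by
        apply Metric.closedBall_subset_closedBall (le_max_left _ _)
        exact hR0 (subset_tsupport g (Function.mem_support.mpr hgne))
      simp only [Metric.mem_closedBall, dist_zero_right] at h1
      calc ‖p.1‖ = ‖(p.1 - p.2 • e0) + p.2 • e0‖ := by ring_nf
        _ ≤ ‖p.1 - p.2 • e0‖ + ‖p.2 • e0‖ := norm_add_le _ _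
        _ ≤ max R0 0 + |p.2| * ‖e0‖ := by
            rw [norm_smul, Real.norm_eq_abs]; exact add_le_add h1 le_rfl
        _ ≤ max R0 0 + 2 * T * ‖e0‖ := by
            have : |p.2| ≤ 2 * T := by
              rw [abs_of_nonneg hv.1]; exact hv.2
            have h2 : (0:ℝ) ≤ ‖e0‖ := norm_nonneg _
            nlinarith
        _ = R := rfl
    · exact hv
  have hHint : Integrable
      (fun p : (Fin (d+1) → ℝ) × ℝ => P p.1 * (qn p.2 * g (p.1 - p.2 • e0)))
      (volume.prod volume) := by
    refine Integrable.mono'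
      (g := fun p => Set.indicator
        (Metric.closedBall (0 : Fin (d+1) → ℝ) R ×ˢ Set.Icc (0:ℝ) (2*T))
        (fun _ => CP * (MQ * Cg)) p) ?_ hHmeas (Filter.Eventually.of_forall fun p => ?_)
    · rw [integrable_indicator_iff (measurableSet_closedBall.prod measurableSet_Icc)]
      apply (integrableOn_const_iff (by finiteness)).mpr
      right
      rw [Measure.prod_prod]
      exact ENNReal.mul_lt_top measure_closedBall_lt_top measure_Icc_lt_top
    · by_cases hp : P p.1 * (qn p.2 * g (p.1 - p.2 • e0)) = 0
      · rw [hp]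
        simp only [norm_zero]
        exact Set.indicator_nonneg (fun _ _ => by positivity) p
      · have hmem := hHsupp p hp
        simp only [Set.indicator_of_mem hmem, Real.norm_eq_abs, abs_mul]
        have h1 : |P p.1| ≤ CP := hCPbd _ hmem.1
        have h2 : |qn p.2| ≤ MQ := hqnbd _
        have h3 : |g (p.1 - p.2 • e0)| ≤ Cg := hCgbd _
        exact mul_le_mul h1 (mul_le_mul h2 h3 (abs_nonneg _) hMQ0) (by positivity) hCP0'
  -- inner integral
  set Mj : ℕ → ℝ := fun j => ∫ z : Fin (d+1) → ℝ,
    (z 0 ^ j * ∏ i : Fin d, z i.succ ^ ℓ i.succ) * g z with hMj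
  set Sv : ℝ → ℝ := fun v => ∫ z : Fin (d+1) → ℝ, P z * g (z - v • e0) with hSv
  have hint_j : ∀ j : ℕ, Integrable
      (fun z : Fin (d+1) → ℝ => (z 0 ^ j * ∏ i : Fin d, z i.succ ^ ℓ i.succ) * g z) := by
    intro j
    apply Continuous.integrable_of_hasCompactSupport
    · exact (((continuous_apply (0 : Fin (d+1))).pow j).mul
        (continuous_finset_prod _ fun i _ => (continuous_apply i.succ).pow _)).mul
        hgsm.1.continuous
    · exact hgsm.2.mul_left
  have hSveq : ∀ v : ℝ, Sv v = ∑ j ∈ Finset.range (ℓ 0 + 1),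
      (v ^ (ℓ 0 - j) * ((ℓ 0).choose j : ℝ)) * Mj j := by
    intro v
    have step1 : Sv v = ∫ z : Fin (d+1) → ℝ, P (z + v • e0) * g z := by
      rw [hSv]
      have h := integral_sub_right_eq_self (μ := volume)
        (fun w : Fin (d+1) → ℝ => P (w + v • e0) * g w) (v • e0)
      simp only [sub_add_cancel] at h
      exact h
    have step2 : ∀ z : Fin (d+1) → ℝ, P (z + v • e0)
        = (z 0 + v) ^ (ℓ 0) * ∏ i : Fin d, z i.succ ^ ℓ i.succ := by
      intro z
      simp only [hP]
      rw [Fin.prod_univ_succ]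
      congr 1
      · congr 1
        simp [he0]
      · apply Finset.prod_congr rfl
        intro i _
        congr 2
        simp [he0, Pi.single_apply, (Fin.succ_ne_zero i).symm]
    have step3 : ∀ z : Fin (d+1) → ℝ, P (z + v • e0) * g z
        = ∑ j ∈ Finset.range (ℓ 0 + 1),
          (v ^ (ℓ 0 - j) * ((ℓ 0).choose j : ℝ)) *
            ((z 0 ^ j * ∏ i : Fin d, z i.succ ^ ℓ i.succ) * g z) := by
      intro z
      rw [step2 z, add_pow, Finset.sum_mul, Finset.sum_mul]
      apply Finset.sum_congr rfl
      intro j _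
      ring
    rw [step1]
    calc (∫ z : Fin (d+1) → ℝ, P (z + v • e0) * g z)
        = ∫ z : Fin (d+1) → ℝ, ∑ j ∈ Finset.range (ℓ 0 + 1),
            (v ^ (ℓ 0 - j) * ((ℓ 0).choose j : ℝ)) *
              ((z 0 ^ j * ∏ i : Fin d, z i.succ ^ ℓ i.succ) * g z) := by
          congr 1; funext z; exact step3 z
      _ = ∑ j ∈ Finset.range (ℓ 0 + 1), ∫ z : Fin (d+1) → ℝ,
            (v ^ (ℓ 0 - j) * ((ℓ 0).choose j : ℝ)) *
              ((z 0 ^ j * ∏ i : Fin d, z i.succ ^ ℓ i.succ) * g z) :=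
          integral_finset_sum _ (fun j _ => (hint_j j).const_mul _)
      _ = ∑ j ∈ Finset.range (ℓ 0 + 1),
            (v ^ (ℓ 0 - j) * ((ℓ 0).choose j : ℝ)) * Mj j := by
          apply Finset.sum_congr rfl
          intro j _
          rw [integral_const_mul, hMj]
  -- assembling
  have hmain : (∫ z : Fin (d+1) → ℝ, (∏ i, z i ^ ℓ i) * Dmulti k (KQnm n m) z)
      = ∫ v : ℝ, qn v * Sv v := by
    have h1 : ∀ z : Fin (d+1) → ℝ, (∏ i, z i ^ ℓ i) * Dmulti k (KQnm n m) z
        = ∫ v : ℝ, P z * (qn v * g (z - v • e0)) := by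
      intro z
      rw [hcomm]
      exact (integral_const_mul (P z) _).symm
    calc (∫ z : Fin (d+1) → ℝ, (∏ i, z i ^ ℓ i) * Dmulti k (KQnm n m) z)
        = ∫ z : Fin (d+1) → ℝ, ∫ v : ℝ, P z * (qn v * g (z - v • e0)) := by
          congr 1; funext z; exact h1 z
      _ = ∫ v : ℝ, ∫ z : Fin (d+1) → ℝ, P z * (qn v * g (z - v • e0)) :=
          integral_integral_swap hHint
      _ = ∫ v : ℝ, qn v * Sv v := by
          congr 1
          funext v
          rw [hSv, ← integral_const_mul]
          congr 1
          funext z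
          ring
  rw [hmain]
  set W : ℝ := (2*T+1) ^ (ℓ 0) * (C' * (2:ℝ) ^ (-β * (n:ℝ))) with hW
  have h2rpow : (0:ℝ) < (2:ℝ) ^ (-β * (n:ℝ)) := Real.rpow_pos_of_pos two_pos _
  have hWnn : 0 ≤ W := by positivity
  have hSvbd : ∀ v, v ∈ Set.Icc (0:ℝ) (2*T) → |Sv v| ≤ W := by
    intro v hv
    have hvabs : |v| ≤ 2*T := by rw [abs_of_nonneg hv.1]; exact hv.2
    rw [hSveq v]
    calc |∑ j ∈ Finset.range (ℓ 0 + 1), (v ^ (ℓ 0 - j) * ((ℓ 0).choose j : ℝ)) * Mj j|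
        ≤ ∑ j ∈ Finset.range (ℓ 0 + 1), |(v ^ (ℓ 0 - j) * ((ℓ 0).choose j : ℝ)) * Mj j| :=
          Finset.abs_sum_le_sum_abs _ _
      _ ≤ ∑ j ∈ Finset.range (ℓ 0 + 1),
            ((2*T) ^ (ℓ 0 - j) * ((ℓ 0).choose j : ℝ)) * (C' * (2:ℝ) ^ (-β * (n:ℝ))) := by
          apply Finset.sum_le_sum
          intro j hj
          have hj' : j ≤ ℓ 0 := Nat.lt_succ_iff.mp (Finset.mem_range.mp hj)
          rw [abs_mul, abs_mul, abs_pow]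
          have e1 : |v| ^ (ℓ 0 - j) ≤ (2*T) ^ (ℓ 0 - j) :=
            pow_le_pow_left₀ (abs_nonneg v) hvabs _
          have e2 : |Mj j| ≤ C' * (2:ℝ) ^ (-β * (n:ℝ)) := hmom n j hj'
          have e3 : |((ℓ 0).choose j : ℝ)| = ((ℓ 0).choose j : ℝ) :=
            abs_of_nonneg (by positivity)
          rw [e3]
          exact mul_le_mul (mul_le_mul_of_nonneg_right e1 (by positivity)) e2
            (abs_nonneg _) (by positivity)
      _ = W := by
          rw [← Finset.sum_mul, hW]
          congr 1
          calc ∑ j ∈ Finset.range (ℓ 0 + 1), (2*T) ^ (ℓ 0 - j) * ((ℓ 0).choose j : ℝ)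
              = (1 + 2*T) ^ (ℓ 0) := by rw [add_pow]; simp
            _ = (2*T+1) ^ (ℓ 0) := by ring
  set a0 : ℝ := ((m:ℝ) - 1)/A with ha0
  set b0 : ℝ := ((m:ℝ) + 1)/A with hb0
  have hba : b0 - a0 = 2 / A := by rw [hb0, ha0]; field_simp; ring
  have hba' : (0:ℝ) ≤ b0 - a0 := by rw [hba]; positivity
  have hIndInt : Integrable ((Set.Icc a0 b0).indicator (fun _ => MQ * W)) := by
    rw [integrable_indicator_iff measurableSet_Icc]
    exact (integrableOn_const_iff (by finiteness)).mpr (Or.inr measure_Icc_lt_top)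
  have hptbd : ∀ v : ℝ, ‖qn v * Sv v‖ ≤ (Set.Icc a0 b0).indicator (fun _ => MQ * W) v := by
    intro v
    by_cases hv : qn v = 0
    · rw [hv, zero_mul, norm_zero]
      exact Set.indicator_nonneg (fun _ _ => mul_nonneg hMQ0 hWnn) v
    · rw [Set.indicator_of_mem (hqnsuppI v hv), Real.norm_eq_abs, abs_mul]
      exact mul_le_mul (hqnbd v) (hSvbd v (hqnsuppQ v hv)) (abs_nonneg _) hMQ0
  have hest : |∫ v : ℝ, qn v * Sv v| ≤ MQ * W * (2 / A) := by
    have h := norm_integral_le_of_norm_le hIndInt (Filter.Eventually.of_forall hptbd)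
    rw [Real.norm_eq_abs] at h
    calc |∫ v : ℝ, qn v * Sv v|
        ≤ ∫ v : ℝ, (Set.Icc a0 b0).indicator (fun _ => MQ * W) v := h
      _ = (volume (Set.Icc a0 b0)).toReal * (MQ * W) := by
          rw [integral_indicator_const _ measurableSet_Icc, smul_eq_mul, measureReal_def]
      _ = (b0 - a0) * (MQ * W) := by
          rw [Real.volume_Icc, ENNReal.toReal_ofReal hba']
      _ = MQ * W * (2 / A) := by rw [hba]; ring
  have hpow : (2:ℝ) ^ (-(β + (s 0:ℝ)) * (n:ℝ)) = (2:ℝ) ^ (-β * (n:ℝ)) * A⁻¹ := by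
    have hAinv : A⁻¹ = (2:ℝ) ^ (-(((s 0 * n : ℕ)) : ℝ)) := by
      rw [Real.rpow_neg (by norm_num), Real.rpow_natCast, hA]
    rw [hAinv, ← Real.rpow_add (by norm_num : (0:ℝ) < 2)]
    congr 1
    push_cast
    ring
  calc |∫ v : ℝ, qn v * Sv v| ≤ MQ * W * (2 / A) := hest
    _ = (2*T+1) ^ (ℓ 0) * (2 * C' * MQ * ((2:ℝ) ^ (-β * (n:ℝ)) * A⁻¹)) := by
        rw [hW]; ring
    _ ≤ (2+2*T) ^ (ℓ 0) * (2 * C' * MQ * ((2:ℝ) ^ (-β * (n:ℝ)) * A⁻¹)) := by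
        apply mul_le_mul_of_nonneg_right
          (pow_le_pow_left₀ (by linarith) (by linarith) _)
        have hAinvnn : (0:ℝ) ≤ A⁻¹ := by positivity
        positivity
    _ = 2 * (2 + 2*T) ^ (ℓ 0) * C' * MQ * (2:ℝ) ^ (-(β + (s 0:ℝ)) * (n:ℝ)) := by
        rw [hpow]; ring
end

section
/- There exists a universal constant C > 0 with the following property. Let n ∈ ℕ, let m ∈ ℤ with m ≥ −1, let ε ∈ [0,1] and C₀, C₁ > 0. Let H : ℝ⁴ → ℝ be measurable with |H(z)| ≤ C₁·2^n for all z and with supp H ⊆ {z ∈ ℝ⁴ : ‖z − (m·4^{−n}, 0)‖_s ≤ (1+√2)·2^{−n}}, and let G : ℝ⁴ → ℝ be measurable with |G(t,x)| ≤ C₀/(|t| + ‖x‖² + ε²) for almost every (t,x). Then z ↦ H(z)G(z) is integrable on ℝ⁴ and |∫_{ℝ⁴} H(z)G(z) dz| ≤ C·C₀·C₁·2^{−2n}/(m+2). -/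
/-!
On its support, `H G` lives in the parabolic cylinder `[t₀ - r², t₀ + r²] × B(0, r)` with
`t₀ = m 4⁻ⁿ` and `r ≤ 3 · 2⁻ⁿ`, and Fubini reduces everything to a time integral times a space
integral. For small `m` the cylinder may touch the singularity; there `|G| ≤ C₀ / ‖x‖²`, which
is integrable on balls of `ℝ³`: in polar coordinates, `∫_{B(0,r)} ‖x‖⁻² = 3 |B(0,1)| r`.
For `m ≥ 20` the cylinder stays at time distance `≥ (m + 2) 4⁻ⁿ / 2` from `t = 0`, so
`|G| ≤ 2 C₀ 4ⁿ / (m + 2)` there.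
-/

open MeasureTheory Set Metric Module

/-- The parabolic scaled norm `‖(t,x)‖_s = |t|^{1/2} + ‖x‖` on `ℝ⁴ = ℝ × ℝ³`. -/
noncomputable def parNorm (z : ℝ × EuclideanSpace ℝ (Fin 3)) : ℝ :=
  Real.sqrt |z.1| + ‖z.2‖

local notation "E3" => EuclideanSpace ℝ (Fin 3)

lemma indicator_closedBall_inv_norm_sq {E : Type*} [SeminormedAddCommGroup E] (r : ℝ) :
    (closedBall (0 : E) r).indicator (fun x => (‖x‖ ^ 2)⁻¹) =
      fun x => (Iic r).indicator (fun y : ℝ => (y ^ 2)⁻¹) ‖x‖ := by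
  ext x
  simp only [indicator, mem_closedBall_zero_iff, mem_Iic]

section Radial

variable {E : Type*} [NormedAddCommGroup E] [NormedSpace ℝ E] [FiniteDimensional ℝ E]
  [MeasurableSpace E] [BorelSpace E] (μ : Measure E) [μ.IsAddHaarMeasure]

lemma eqOn_pow_smul_indicator_Iic_inv_sq {d : ℕ} (hd : 3 ≤ d) (r : ℝ) :
    EqOn (fun y : ℝ => y ^ (d - 1) • (Iic r).indicator (fun y => (y ^ 2)⁻¹) y)
      ((Ioc 0 r).indicator fun y => y ^ (d - 3)) (Ioi 0) := by
  intro y (hy : 0 < y)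
  by_cases hyr : y ≤ r
  · have hd' : d - 1 = d - 3 + 2 := by omega
    simp [indicator, hy, hyr, hd', pow_add, hy.ne']
  · dsimp only
    rw [indicator_of_notMem (show y ∉ Iic r from hyr),
      indicator_of_notMem (show y ∉ Ioc 0 r from fun h => hyr h.2), smul_zero]

lemma integrableOn_closedBall_inv_norm_sq (hd : 3 ≤ finrank ℝ E) (r : ℝ) :
    IntegrableOn (fun x : E => (‖x‖ ^ 2)⁻¹) (closedBall 0 r) μ := by
  have : Nontrivial E := Module.nontrivial_of_finrank_pos (R := ℝ) (M := E) (by omega)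
  rw [← integrable_indicator_iff measurableSet_closedBall, indicator_closedBall_inv_norm_sq,
    integrable_fun_norm_addHaar μ,
    integrableOn_congr_fun (eqOn_pow_smul_indicator_Iic_inv_sq hd r) measurableSet_Ioi]
  refine Integrable.integrableOn ?_
  rw [integrable_indicator_iff measurableSet_Ioc]
  exact (continuous_pow _).integrableOn_Icc.mono_set Ioc_subset_Icc_self

lemma integral_closedBall_inv_norm_sq (hd : 3 ≤ finrank ℝ E) {r : ℝ} (hr : 0 ≤ r) :
    ∫ x in closedBall 0 r, (‖x‖ ^ 2)⁻¹ ∂μ =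
      finrank ℝ E / (finrank ℝ E - 2) * μ.real (ball 0 1) * r ^ (finrank ℝ E - 2) := by
  have : Nontrivial E := Module.nontrivial_of_finrank_pos (R := ℝ) (M := E) (by omega)
  rw [← integral_indicator measurableSet_closedBall, indicator_closedBall_inv_norm_sq,
    integral_fun_norm_addHaar μ,
    setIntegral_congr_fun measurableSet_Ioi (eqOn_pow_smul_indicator_Iic_inv_sq hd r),
    setIntegral_indicator measurableSet_Ioc,
    inter_eq_right.2 Ioc_subset_Ioi_self, ← intervalIntegral.integral_of_le hr, integral_pow]
  have hd' : finrank ℝ E - 3 + 1 = finrank ℝ E - 2 := by omega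
  have hd'' : ((finrank ℝ E - 3 : ℕ) : ℝ) + 1 = finrank ℝ E - 2 := by
    rw [Nat.cast_sub hd]; push_cast; ring
  rw [hd', hd'', zero_pow (by omega), nsmul_eq_mul, smul_eq_mul]
  ring

end Radial

lemma integrable_and_norm_integral_le_of_support_subset_prod
    {α β : Type*} [MeasurableSpace α] [MeasurableSpace β] {μ : Measure α} {ν : Measure β}
    [SFinite μ] [SFinite ν] {s : Set α} {t : Set β} {φ : α → ℝ} {ψ : β → ℝ} {F : α × β → ℝ}
    (hs : MeasurableSet s) (ht : MeasurableSet t) (hφ : IntegrableOn φ s μ)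
    (hψ : IntegrableOn ψ t ν) (hφ0 : 0 ≤ φ) (hψ0 : 0 ≤ ψ)
    (hF : AEStronglyMeasurable F (μ.prod ν)) (hsupp : Function.support F ⊆ s ×ˢ t)
    (hb : ∀ᵐ z ∂μ.prod ν, z ∈ s ×ˢ t → ‖F z‖ ≤ φ z.1 * ψ z.2) :
    Integrable F (μ.prod ν) ∧ ‖∫ z, F z ∂μ.prod ν‖ ≤ (∫ x in s, φ x ∂μ) * ∫ y in t, ψ y ∂ν := by
  have hD : Integrable (fun z : α × β => s.indicator φ z.1 * t.indicator ψ z.2) (μ.prod ν) :=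
    ((integrable_indicator_iff hs).2 hφ).mul_prod ((integrable_indicator_iff ht).2 hψ)
  have hFD : ∀ᵐ z ∂μ.prod ν, ‖F z‖ ≤ s.indicator φ z.1 * t.indicator ψ z.2 := by
    filter_upwards [hb] with z hz
    by_cases hst : z ∈ s ×ˢ t
    · rw [indicator_of_mem hst.1, indicator_of_mem hst.2]
      exact hz hst
    · rw [Function.notMem_support.1 (fun h => hst (hsupp h)), norm_zero]
      exact mul_nonneg (indicator_nonneg (fun x _ => hφ0 x) _)
        (indicator_nonneg (fun y _ => hψ0 y) _)
  refine ⟨hD.mono' hF hFD, ?_⟩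
  calc ‖∫ z, F z ∂μ.prod ν‖ ≤ ∫ z, s.indicator φ z.1 * t.indicator ψ z.2 ∂μ.prod ν :=
        norm_integral_le_of_norm_le hD hFD
    _ = (∫ x in s, φ x ∂μ) * ∫ y in t, ψ y ∂ν := by
      rw [integral_prod_mul, integral_indicator hs, integral_indicator ht]

def parCyl (t₀ r : ℝ) : Set (ℝ × E3) :=
  Icc (t₀ - r ^ 2) (t₀ + r ^ 2) ×ˢ closedBall 0 r

lemma setOf_parNorm_le_subset_parCyl (t₀ r : ℝ) :
    {z : ℝ × E3 | parNorm (z.1 - t₀, z.2) ≤ r} ⊆ parCyl t₀ r := by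
  intro z (hz : √|z.1 - t₀| + ‖z.2‖ ≤ r)
  have hr : √|z.1 - t₀| ≤ r := by linarith [norm_nonneg z.2]
  have ht : |z.1 - t₀| ≤ r ^ 2 := (Real.sqrt_le_iff.1 hr).2
  refine ⟨⟨by linarith [neg_abs_le (z.1 - t₀)], by linarith [le_abs_self (z.1 - t₀)]⟩, ?_⟩
  rw [mem_closedBall_zero_iff]
  linarith [Real.sqrt_nonneg |z.1 - t₀|]

lemma integrable_and_abs_integral_le_of_le_div_norm_sq {F : ℝ × E3 → ℝ} {t₀ r K : ℝ}
    (hr : 0 ≤ r) (hK : 0 ≤ K) (hF : AEStronglyMeasurable F)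
    (hsupp : Function.support F ⊆ parCyl t₀ r)
    (hb : ∀ᵐ z, z ∈ parCyl t₀ r → |F z| ≤ K / ‖z.2‖ ^ 2) :
    Integrable F ∧ |∫ z, F z| ≤ 2 * r ^ 2 * K * (3 * volume.real (ball (0 : E3) 1) * r) := by
  rw [Measure.volume_eq_prod] at hF hb ⊢
  have hd : 3 ≤ finrank ℝ E3 := by simp
  obtain ⟨hint, hle⟩ := integrable_and_norm_integral_le_of_support_subset_prod
    (φ := fun _ => K) (ψ := fun x : E3 => (‖x‖ ^ 2)⁻¹) measurableSet_Icc measurableSet_closedBall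
    (integrableOn_const measure_Icc_lt_top.ne) (integrableOn_closedBall_inv_norm_sq volume hd r)
    (fun _ => hK) (fun x => by positivity) hF hsupp
    (by simpa only [parCyl, Real.norm_eq_abs, div_eq_mul_inv] using hb)
  refine ⟨hint, ?_⟩
  rw [setIntegral_const, integral_closedBall_inv_norm_sq volume hd hr,
    Real.volume_real_Icc_of_le (by nlinarith), finrank_euclideanSpace_fin] at hle
  norm_num at hle
  convert hle using 1
  ring

lemma integrable_and_abs_integral_le_of_le {F : ℝ × E3 → ℝ} {t₀ r K : ℝ}
    (hr : 0 ≤ r) (hK : 0 ≤ K) (hF : AEStronglyMeasurable F)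
    (hsupp : Function.support F ⊆ parCyl t₀ r) (hb : ∀ᵐ z, z ∈ parCyl t₀ r → |F z| ≤ K) :
    Integrable F ∧ |∫ z, F z| ≤ 2 * r ^ 2 * K * (volume.real (ball (0 : E3) 1) * r ^ 3) := by
  rw [Measure.volume_eq_prod] at hF hb ⊢
  obtain ⟨hint, hle⟩ := integrable_and_norm_integral_le_of_support_subset_prod
    (φ := fun _ => K) (ψ := fun _ : E3 => (1 : ℝ)) measurableSet_Icc measurableSet_closedBall
    (integrableOn_const measure_Icc_lt_top.ne) (integrableOn_const measure_closedBall_lt_top.ne)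
    (fun _ => hK) (fun _ => zero_le_one) hF hsupp
    (by simpa only [parCyl, Real.norm_eq_abs, mul_one] using hb)
  refine ⟨hint, ?_⟩
  rw [setIntegral_const, setIntegral_const, Real.volume_real_Icc_of_le (by nlinarith),
    Measure.addHaar_real_closedBall _ _ hr, finrank_euclideanSpace_fin] at hle
  simp only [smul_eq_mul, mul_one, Real.norm_eq_abs] at hle
  convert hle using 1
  ring

section Cylinder

variable {H G : ℝ × E3 → ℝ} {ρ m ε C₀ C₁ : ℝ}

theorem integrable_mul_and_abs_integral_mul_le_near (hρ : 0 < ρ) (hC₀ : 0 ≤ C₀) (hC₁ : 0 ≤ C₁)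
    (hHm : AEStronglyMeasurable H) (hH : ∀ z, |H z| ≤ C₁ / ρ)
    (hsupp : Function.support H ⊆ parCyl (m * ρ ^ 2) (3 * ρ)) (hGm : AEStronglyMeasurable G)
    (hG : ∀ᵐ z : ℝ × E3, |G z| ≤ C₀ / (|z.1| + ‖z.2‖ ^ 2 + ε ^ 2)) :
    Integrable (fun z => H z * G z) ∧
      |∫ z, H z * G z| ≤ 162 * volume.real (ball (0 : E3) 1) * C₀ * C₁ * ρ ^ 2 := by
  have hx : ∀ᵐ z : ℝ × E3, z.2 ≠ 0 := by
    rw [Measure.volume_eq_prod]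
    exact Measure.quasiMeasurePreserving_snd.ae (Measure.ae_ne volume 0)
  -- at `z.2 = 0` the bound below reads `|H z * G z| ≤ 0` (division by zero)
  have hb : ∀ᵐ z, z ∈ parCyl (m * ρ ^ 2) (3 * ρ) → |H z * G z| ≤ C₀ * C₁ / ρ / ‖z.2‖ ^ 2 := by
    filter_upwards [hG, hx] with z hGz hz _
    calc |H z * G z| = |H z| * |G z| := abs_mul _ _
      _ ≤ C₁ / ρ * (C₀ / ‖z.2‖ ^ 2) := by
        gcongr
        · exact hH z
        · refine hGz.trans (div_le_div_of_nonneg_left hC₀ (by positivity) ?_)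
          nlinarith [abs_nonneg z.1, sq_nonneg ε]
      _ = C₀ * C₁ / ρ / ‖z.2‖ ^ 2 := by ring
  obtain ⟨hint, hle⟩ := integrable_and_abs_integral_le_of_le_div_norm_sq (by positivity)
    (by positivity) (hHm.mul hGm) ((Function.support_mul_subset_left _ _).trans hsupp) hb
  refine ⟨hint, hle.trans_eq ?_⟩
  field_simp
  ring

theorem integrable_mul_and_abs_integral_mul_le_far (hρ : 0 < ρ) (hm : 20 ≤ m) (hC₀ : 0 ≤ C₀)
    (hC₁ : 0 ≤ C₁) (hHm : AEStronglyMeasurable H) (hH : ∀ z, |H z| ≤ C₁ / ρ)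
    (hsupp : Function.support H ⊆ parCyl (m * ρ ^ 2) (3 * ρ)) (hGm : AEStronglyMeasurable G)
    (hG : ∀ᵐ z : ℝ × E3, |G z| ≤ C₀ / (|z.1| + ‖z.2‖ ^ 2 + ε ^ 2)) :
    Integrable (fun z => H z * G z) ∧
      |∫ z, H z * G z| ≤ 972 * volume.real (ball (0 : E3) 1) * C₀ * C₁ * ρ ^ 2 / (m + 2) := by
  have hm2 : 0 < m + 2 := by linarith
  have hb : ∀ᵐ z, z ∈ parCyl (m * ρ ^ 2) (3 * ρ) →
      |H z * G z| ≤ C₁ / ρ * (C₀ / ((m + 2) * ρ ^ 2 / 2)) := by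
    filter_upwards [hG] with z hGz hz
    have ht : (m + 2) * ρ ^ 2 / 2 ≤ |z.1| := by nlinarith [hz.1.1, le_abs_self z.1]
    rw [abs_mul]
    gcongr
    · exact hH z
    · refine hGz.trans (div_le_div_of_nonneg_left hC₀ (by positivity) ?_)
      nlinarith [sq_nonneg ‖z.2‖, sq_nonneg ε]
  obtain ⟨hint, hle⟩ := integrable_and_abs_integral_le_of_le (by positivity) (by positivity)
    (hHm.mul hGm) ((Function.support_mul_subset_left _ _).trans hsupp) hb
  refine ⟨hint, hle.trans_eq ?_⟩
  field_simp
  ring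

theorem integrable_mul_and_abs_integral_mul_le (hρ : 0 < ρ) (hm : -1 ≤ m) (hC₀ : 0 ≤ C₀)
    (hHm : AEStronglyMeasurable H) (hH : ∀ z, |H z| ≤ C₁ / ρ)
    (hsupp : Function.support H ⊆ {z | parNorm (z.1 - m * ρ ^ 2, z.2) ≤ 3 * ρ})
    (hGm : AEStronglyMeasurable G)
    (hG : ∀ᵐ z : ℝ × E3, |G z| ≤ C₀ / (|z.1| + ‖z.2‖ ^ 2 + ε ^ 2)) :
    Integrable (fun z => H z * G z) ∧
      |∫ z, H z * G z| ≤ 4000 * volume.real (ball (0 : E3) 1) * C₀ * C₁ * ρ ^ 2 / (m + 2) := by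
  have hC₁ : 0 ≤ C₁ := by
    have := (abs_nonneg _).trans (hH 0)
    rwa [le_div_iff₀ hρ, zero_mul] at this
  have hcyl := hsupp.trans (setOf_parNorm_le_subset_parCyl _ _)
  rcases le_total m 20 with hm20 | hm20
  · obtain ⟨hint, hle⟩ :=
      integrable_mul_and_abs_integral_mul_le_near hρ hC₀ hC₁ hHm hH hcyl hGm hG
    refine ⟨hint, hle.trans ?_⟩
    rw [le_div_iff₀ (by linarith)]
    nlinarith [show 0 ≤ volume.real (ball (0 : E3) 1) * C₀ * C₁ * ρ ^ 2 by positivity]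
  · obtain ⟨hint, hle⟩ :=
      integrable_mul_and_abs_integral_mul_le_far hρ hm20 hC₀ hC₁ hHm hH hcyl hGm hG
    refine ⟨hint, hle.trans ?_⟩
    gcongr
    linarith

end Cylinder

/-- the key integral estimate (Lemma 5.1 of the corrigendum). If `H` is bounded
by `C₁ 2ⁿ` and supported in the scaled ball of radius `(1+√2)2^{-n}` around `(m·4^{-n},0)`,
and `|G(t,x)| ≤ C₀/(|t| + ‖x‖² + ε²)` a.e., then `H·G` is integrable and
`|∫ H G| ≤ C·C₀·C₁·2^{-2n}/(m+2)` for a universal constant `C`. -/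
theorem stmt_5 :
    ∃ C : ℝ, 0 < C ∧
      ∀ (n : ℕ) (m : ℤ), -1 ≤ m →
      ∀ ε : ℝ, ε ∈ Set.Icc (0 : ℝ) 1 →
      ∀ C₀ C₁ : ℝ, 0 < C₀ → 0 < C₁ →
      ∀ H G : ℝ × EuclideanSpace ℝ (Fin 3) → ℝ,
        Measurable H →
        (∀ z, |H z| ≤ C₁ * 2 ^ n) →
        (Function.support H ⊆
          {z : ℝ × EuclideanSpace ℝ (Fin 3) |
            parNorm (z.1 - (m : ℝ) * (4 : ℝ) ^ (-(n : ℤ)), z.2) ≤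
              (1 + Real.sqrt 2) * (2 : ℝ) ^ (-(n : ℤ))}) →
        Measurable G →
        (∀ᵐ z : ℝ × EuclideanSpace ℝ (Fin 3),
          |G z| ≤ C₀ / (|z.1| + ‖z.2‖ ^ 2 + ε ^ 2)) →
        Integrable (fun z => H z * G z) ∧
          |∫ z : ℝ × EuclideanSpace ℝ (Fin 3), H z * G z| ≤
            C * C₀ * C₁ * (2 : ℝ) ^ (-(2 * n : ℤ)) / ((m : ℝ) + 2) := by
  refine ⟨4000 * volume.real (ball (0 : E3) 1), ?_, ?_⟩
  · have : 0 < volume.real (ball (0 : E3) 1) :=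
      ENNReal.toReal_pos (measure_ball_pos _ _ one_pos).ne' measure_ball_lt_top.ne
    positivity
  intro n m hm ε _ C₀ C₁ hC₀ _ H G hHm hH hsupp hGm hG
  set ρ : ℝ := 2 ^ (-(n : ℤ))
  have hρ : 0 < ρ := by positivity
  have h4 : (4 : ℝ) ^ (-(n : ℤ)) = ρ ^ 2 := by
    rw [show (4 : ℝ) = 2 ^ 2 by norm_num, ← zpow_natCast, ← zpow_mul, ← zpow_natCast, ← zpow_mul]
    ring_nf
  have h2n : (2 : ℝ) ^ (-(2 * n : ℤ)) = ρ ^ 2 := by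
    rw [← zpow_natCast, ← zpow_mul]; ring_nf
  have hH' : ∀ z, |H z| ≤ C₁ / ρ := by
    intro z
    simpa only [ρ, div_eq_mul_inv, zpow_neg, inv_inv, zpow_natCast] using hH z
  have hsupp' : Function.support H ⊆ {z | parNorm (z.1 - m * ρ ^ 2, z.2) ≤ 3 * ρ} := by
    refine hsupp.trans fun z (hz : parNorm _ ≤ _) => ?_
    rw [h4] at hz
    refine hz.trans (mul_le_mul_of_nonneg_right ?_ hρ.le)
    nlinarith [Real.sq_sqrt (show (0 : ℝ) ≤ 2 by norm_num), Real.sqrt_nonneg 2]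
  rw [h2n]
  exact integrable_mul_and_abs_integral_mul_le hρ (by exact_mod_cast hm) hC₀.le
    hHm.aestronglyMeasurable hH' hsupp' hGm.aestronglyMeasurable hG
end

section
/- Let E be a real Banach space, T₀ > 0, and let S : [0,T₀] → (E →L[ℝ] E) be such that (t,y) ↦ S(t)y is continuous and sup_{t∈[0,T₀]} ‖S(t)‖ < ∞. Let Q : ℝ → ℝ be continuous, g : [0,T₀] → E continuous, and u₀ ∈ E. Define u : [0,T₀] → E by u(t) = ∫₀ᵗ S(t−s) g(s) ds + S(t) u₀, and define S^Q(t) y = ∫₀ᵗ Q(t−s) S(s) y ds for y ∈ E. Then for every t ∈ [0,T₀]: ∫₀ᵗ Q(t−s) u(s) ds = ∫₀ᵗ S^Q(t−s) g(s) ds + S^Q(t) u₀. -/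
/-!
Substituting the formula for `u`, the left side splits into
`∫₀ᵗ ∫₀ˢ Q(t-s) S(s-r) g(r) dr ds` plus `S^Q(t) u₀`. Fubini on the triangle `0 ≤ r ≤ s ≤ t`
exchanges the order of integration, and the shift `s ↦ s - r` turns the new inner integral
`∫ᵣᵗ Q(t-s) S(s-r) g(r) ds` into `S^Q(t-r) g(r)`.
-/

open MeasureTheory intervalIntegral Set

def triangle (a b : ℝ) : Set (ℝ × ℝ) := {p | a ≤ p.2 ∧ p.2 ≤ p.1 ∧ p.1 ≤ b}

theorem isCompact_triangle (a b : ℝ) : IsCompact (triangle a b) := by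
  refine (isCompact_Icc (a := (a, a)) (b := (b, b))).of_isClosed_subset ?_ ?_
  · exact (isClosed_le continuous_const continuous_snd).inter <|
      (isClosed_le continuous_snd continuous_fst).inter (isClosed_le continuous_fst continuous_const)
  · rintro ⟨s, r⟩ ⟨har, hrs, hsb⟩
    exact ⟨⟨har.trans hrs, har⟩, hsb, hrs.trans hsb⟩

section TriangleFubini

variable {E : Type*} [NormedAddCommGroup E] {f : ℝ → ℝ → E} {a b : ℝ}

noncomputable def triangleCutoff (f : ℝ → ℝ → E) (s r : ℝ) : E := if r < s then f s r else 0

theorem integrableOn_triangleCutoff (hab : a ≤ b)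
    (hf : IntegrableOn (Function.uncurry f) (triangle a b)) :
    IntegrableOn (Function.uncurry (triangleCutoff f)) (uIoc a b ×ˢ uIoc a b) := by
  have hcut : Function.uncurry (triangleCutoff f) =
      {p : ℝ × ℝ | p.2 < p.1}.indicator (Function.uncurry f) := by
    ext ⟨s, r⟩; simp [triangleCutoff, indicator]
  rw [hcut, integrableOn_indicator_iff (measurableSet_lt measurable_snd measurable_fst)]
  refine hf.mono_set ?_
  rintro ⟨s, r⟩ ⟨hrs, hs, hr⟩
  rw [uIoc_of_le hab] at hs hr
  exact ⟨hr.1.le, hrs.le, hs.2⟩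

variable [NormedSpace ℝ E]

theorem integral_triangleCutoff_left {s : ℝ} (hs : s ∈ Ioc a b) :
    ∫ r in a..b, triangleCutoff f s r = ∫ r in a..s, f s r := by
  have hcut : triangleCutoff f s = (Iio s).indicator (f s) := by
    ext r; simp [triangleCutoff, indicator]
  have hinter : Ioc a b ∩ Iio s = Ioo a s := by
    ext r; simp only [mem_inter_iff, mem_Ioc, mem_Iio, mem_Ioo]; grind [hs.2]
  rw [integral_of_le (hs.1.le.trans hs.2), integral_of_le hs.1.le, hcut,
    setIntegral_indicator measurableSet_Iio, hinter, integral_Ioc_eq_integral_Ioo]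

theorem integral_triangleCutoff_right {r : ℝ} (hr : r ∈ Ioc a b) :
    ∫ s in a..b, triangleCutoff f s r = ∫ s in r..b, f s r := by
  have hcut : (fun s => triangleCutoff f s r) = (Ioi r).indicator (fun s => f s r) := by
    ext s; simp [triangleCutoff, indicator]
  rw [integral_of_le (hr.1.le.trans hr.2), integral_of_le hr.2, hcut,
    setIntegral_indicator measurableSet_Ioi, Ioc_inter_Ioi, sup_eq_right.2 hr.1.le]

theorem intervalIntegrable_integral_triangle (hab : a ≤ b)
    (hf : IntegrableOn (Function.uncurry f) (triangle a b)) :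
    IntervalIntegrable (fun s => ∫ r in a..s, f s r) volume a b := by
  have hprod := integrableOn_triangleCutoff hab hf
  rw [IntegrableOn, Measure.volume_eq_prod, ← Measure.prod_restrict, uIoc_of_le hab] at hprod
  rw [intervalIntegrable_iff_integrableOn_Ioc_of_le hab]
  refine (hprod.integral_prod_left).congr ?_
  filter_upwards [ae_restrict_mem measurableSet_Ioc] with s hs
  rw [← integral_triangleCutoff_left hs, integral_of_le hab]
  rfl

theorem integral_integral_triangle_swap (hab : a ≤ b)
    (hf : IntegrableOn (Function.uncurry f) (triangle a b)) :
    ∫ s in a..b, ∫ r in a..s, f s r = ∫ r in a..b, ∫ s in r..b, f s r := by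
  calc ∫ s in a..b, ∫ r in a..s, f s r
      = ∫ s in a..b, ∫ r in a..b, triangleCutoff f s r := by
        refine integral_congr_ae (.of_forall fun s hs => ?_)
        rw [uIoc_of_le hab] at hs
        exact (integral_triangleCutoff_left hs).symm
    _ = ∫ r in a..b, ∫ s in a..b, triangleCutoff f s r :=
        intervalIntegral_intervalIntegral_swap (integrableOn_triangleCutoff hab hf)
    _ = ∫ r in a..b, ∫ s in r..b, f s r := by
        refine integral_congr_ae (.of_forall fun r hr => ?_)
        rw [uIoc_of_le hab] at hr
        exact integral_triangleCutoff_right hr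

end TriangleFubini

theorem continuousOn_triangle_apply_sub {E F : Type*} [TopologicalSpace E] [TopologicalSpace F]
    {S : ℝ → E → F} {g : ℝ → E} {T₀ t : ℝ}
    (hS : ContinuousOn (fun p : ℝ × E => S p.1 p.2) (Icc 0 T₀ ×ˢ univ))
    (hg : ContinuousOn g (Icc 0 T₀)) (htT : t ≤ T₀) :
    ContinuousOn (fun p : ℝ × ℝ => S (p.1 - p.2) (g p.2)) (triangle 0 t) := by
  have hg' : ContinuousOn (fun p : ℝ × ℝ => g p.2) (triangle 0 t) :=
    hg.comp continuous_snd.continuousOn fun p ⟨h0r, hrs, hst⟩ => ⟨h0r, hrs.trans (hst.trans htT)⟩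
  refine hS.comp ((continuous_fst.sub continuous_snd).continuousOn.prodMk hg') ?_
  rintro ⟨s, r⟩ ⟨h0r, hrs, hst⟩
  exact ⟨⟨sub_nonneg.2 hrs, (sub_le_self s h0r).trans (hst.trans htT)⟩, trivial⟩

theorem integral_comp_sub_sub {E : Type*} [NormedAddCommGroup E] [NormedSpace ℝ E]
    (h : ℝ → ℝ → E) (r t : ℝ) :
    ∫ s in r..t, h (t - s) (s - r) = ∫ σ in 0..t - r, h (t - r - σ) σ := by
  simpa only [sub_self, sub_sub_sub_cancel_right] using
    integral_comp_sub_right (fun σ => h (t - r - σ) σ) r (a := r) (b := t)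

theorem stmt_8_general
    (E : Type*) [NormedAddCommGroup E] [NormedSpace ℝ E]
    (T₀ : ℝ)
    (S : ℝ → E →L[ℝ] E)
    (hScont : ContinuousOn (fun p : ℝ × E => S p.1 p.2) (Set.Icc 0 T₀ ×ˢ Set.univ))
    (Q : ℝ → ℝ) (hQ : Continuous Q)
    (g : ℝ → E) (hg : ContinuousOn g (Set.Icc 0 T₀))
    (u₀ : E)
    (u : ℝ → E)
    (hu : ∀ t ∈ Set.Icc (0 : ℝ) T₀,
      u t = (∫ s in (0 : ℝ)..t, S (t - s) (g s)) + S t u₀)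
    (SQ : ℝ → E → E)
    (hSQ : ∀ (t : ℝ) (y : E), SQ t y = ∫ s in (0 : ℝ)..t, Q (t - s) • S s y) :
    ∀ t ∈ Set.Icc (0 : ℝ) T₀,
      (∫ s in (0 : ℝ)..t, Q (t - s) • u s) =
        (∫ s in (0 : ℝ)..t, SQ (t - s) (g s)) + SQ t u₀ := by
  rintro t ⟨ht0, htT⟩
  have hQt : Continuous fun s => Q (t - s) := hQ.comp (continuous_const.sub continuous_id)
  have hK : IntegrableOn (Function.uncurry fun s r => Q (t - s) • S (s - r) (g r))
      (triangle 0 t) :=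
    ContinuousOn.integrableOn_compact (isCompact_triangle 0 t) <|
      (hQt.comp continuous_fst).continuousOn.smul
        (continuousOn_triangle_apply_sub (S := fun τ y => S τ y) hScont hg htT)
  have hSu₀ : IntervalIntegrable (fun s => Q (t - s) • S s u₀) volume 0 t :=
    (hQt.continuousOn.smul (hScont.comp (continuous_id.prodMk continuous_const).continuousOn
      fun s hs => ⟨⟨hs.1, hs.2.trans htT⟩, trivial⟩)).intervalIntegrable_of_Icc ht0
  have hQu : ∫ s in (0 : ℝ)..t, Q (t - s) • u s =
      ∫ s in (0 : ℝ)..t,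
        ((∫ r in (0 : ℝ)..s, Q (t - s) • S (s - r) (g r)) + Q (t - s) • S s u₀) := by
    refine integral_congr fun s hs => ?_
    rw [uIcc_of_le ht0] at hs
    simp only [hu s ⟨hs.1, hs.2.trans htT⟩, smul_add, intervalIntegral.integral_smul]
  rw [hQu, integral_add (intervalIntegrable_integral_triangle ht0 hK) hSu₀,
    integral_integral_triangle_swap ht0 hK, hSQ t u₀]
  congr 1
  refine integral_congr fun r _ => ?_
  rw [hSQ, integral_comp_sub_sub (fun τ σ => Q τ • S σ (g r))]

/-- if `u(t) = ∫₀ᵗ S(t-s) g(s) ds + S(t) u₀` and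
`S^Q(t) y = ∫₀ᵗ Q(t-s) S(s) y ds`, then
`∫₀ᵗ Q(t-s) u(s) ds = ∫₀ᵗ S^Q(t-s) g(s) ds + S^Q(t) u₀` on `[0, T₀]`. -/
theorem stmt_8
    (E : Type*) [NormedAddCommGroup E] [NormedSpace ℝ E] [CompleteSpace E]
    (T₀ : ℝ) (hT₀ : 0 < T₀)
    (S : ℝ → E →L[ℝ] E)
    (hScont : ContinuousOn (fun p : ℝ × E => S p.1 p.2) (Set.Icc 0 T₀ ×ˢ Set.univ))
    (hSbdd : ∃ M : ℝ, ∀ t ∈ Set.Icc (0 : ℝ) T₀, ‖S t‖ ≤ M)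
    (Q : ℝ → ℝ) (hQ : Continuous Q)
    (g : ℝ → E) (hg : ContinuousOn g (Set.Icc 0 T₀))
    (u₀ : E)
    (u : ℝ → E)
    (hu : ∀ t ∈ Set.Icc (0 : ℝ) T₀,
      u t = (∫ s in (0 : ℝ)..t, S (t - s) (g s)) + S t u₀)
    (SQ : ℝ → E → E)
    (hSQ : ∀ (t : ℝ) (y : E), SQ t y = ∫ s in (0 : ℝ)..t, Q (t - s) • S s y) :
    ∀ t ∈ Set.Icc (0 : ℝ) T₀,
      (∫ s in (0 : ℝ)..t, Q (t - s) • u s) =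
        (∫ s in (0 : ℝ)..t, SQ (t - s) (g s)) + SQ t u₀ :=
  stmt_8_general E T₀ S hScont Q hQ g hg u₀ u hu SQ hSQ
end
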